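/- Let f : ℤ → ℤ be a bijection with Lipschitz constants K for f and L for f⁻¹. Then there exists a sign ε ∈ {1, -1} and a constant c ∈ ℤ such that |f(x) - (ε·x + c)| ≤ K·L for all x ∈ ℤ. -/

import Mathlib

/-!
Since `f⁻¹` is `L`-Lipschitz, points more than `K * L` apart have images more than `K` apart,
while consecutive points have images at most `K` apart. So `f` can never cross back over a value
it has moved away from: it is coarsely monotone at scale `K * L`, and so is `f⁻¹`. If both are
coarsely increasing, `f⁻¹` maps `[f a, f b]` into `[a - K * L, b + K * L]`, and counting gives
`f b - f a ≤ b - a + 2 * K * L`; the same bound for `f⁻¹` shows that `f x - x` oscillates by at most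
`2 * K * L`, hence stays within `K * L` of the midpoint of its range.
-/

open Function

def CoarselyStrictMono (D : ℤ) (f : ℤ → ℤ) : Prop :=
  ∀ ⦃x y : ℤ⦄, x + D < y → f x < f y

theorem one_le_of_injective_of_abs_sub_le {f : ℤ → ℤ} {K : ℤ} (hf : Injective f)
    (hLip : ∀ x y, |f x - f y| ≤ K * |x - y|) : 1 ≤ K := by
  simpa using (Int.one_le_abs (sub_ne_zero.2 (hf.ne one_ne_zero))).trans (hLip 1 0)

theorem abs_sub_le_mul_abs_sub_of_leftInverse {f g : ℤ → ℤ} {L : ℤ} (hfg : LeftInverse g f)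
    (hLipInv : ∀ u v, |g u - g v| ≤ L * |u - v|) (x y : ℤ) : |x - y| ≤ L * |f x - f y| := by
  simpa only [hfg x, hfg y] using hLipInv (f x) (f y)

theorem lt_abs_sub_of_leftInverse {f g : ℤ → ℤ} {K L : ℤ} (hfg : LeftInverse g f) (hL : 0 ≤ L)
    (hLipInv : ∀ u v, |g u - g v| ≤ L * |u - v|) {x y : ℤ} (hxy : x + K * L < y) :
    K < |f y - f x| := by
  by_contra! h
  have := abs_sub_le_mul_abs_sub_of_leftInverse hfg hLipInv y x
  have := mul_le_mul_of_nonneg_left h hL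
  linarith [le_abs_self (y - x)]

theorem lt_iff_lt_of_abs_sub_le {a b c K : ℤ} (hab : |b - a| ≤ K) (hb : K < |b - c|) :
    c < a ↔ c < b := by
  rw [abs_le] at hab
  rw [lt_abs] at hb
  omega

theorem lt_iff_lt_of_forall_abs_sub_le {u : ℤ → ℤ} {K c a n : ℤ}
    (hstep : ∀ m ≥ a, |u (m + 1) - u m| ≤ K) (havoid : ∀ m > a, K < |u m - c|) (hn : a ≤ n) :
    c < u n ↔ c < u a := by
  induction n, hn using Int.leInduction with
  | base => rfl
  | succ n hn ih =>
    rw [← ih]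
    exact (lt_iff_lt_of_abs_sub_le (hstep n hn) (havoid _ (by omega))).symm

namespace CoarselyStrictMono

variable {D : ℤ} {f g : ℤ → ℤ}

theorem nonneg (hf : CoarselyStrictMono D f) : 0 ≤ D := by
  by_contra! hD
  exact lt_irrefl _ (hf (x := 0) (y := 0) (by omega))

theorem sub_le_sub_add (hf : CoarselyStrictMono D f) (hgf : RightInverse g f) {a b : ℤ}
    (hab : f a ≤ f b) : f b - f a ≤ b - a + 2 * D := by
  have hmaps : Set.MapsTo g (Finset.Icc (f a) (f b)) (Finset.Icc (a - D) (b + D)) := by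
    intro w hw
    simp only [Finset.coe_Icc, Set.mem_Icc] at hw ⊢
    constructor
    · by_contra! h
      have := hf (x := g w) (y := a) (by omega)
      rw [hgf w] at this
      omega
    · by_contra! h
      have := hf (x := b) (y := g w) (by omega)
      rw [hgf w] at this
      omega
  have := Finset.card_le_card_of_injOn g hmaps hgf.injective.injOn
  rw [Int.card_Icc, Int.card_Icc] at this
  omega

theorem sub_sub_sub_le (hf : CoarselyStrictMono D f) (hg : CoarselyStrictMono D g)
    (hfg : LeftInverse g f) (hgf : RightInverse g f) (x y : ℤ) :
    f y - y - (f x - x) ≤ 2 * D := by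
  rcases le_total x y with hxy | hyx
  · rcases le_or_gt (f x) (f y) with hfxy | hfyx
    · linarith [hf.sub_le_sub_add hgf hfxy]
    · linarith [hf.nonneg]
  · have := hg.sub_le_sub_add (a := f y) (b := f x) hfg (by rwa [hfg x, hfg y])
    rw [hfg x, hfg y] at this
    linarith

end CoarselyStrictMono

theorem coarselyStrictMono_of_lt {f : ℤ → ℤ} {K D x₀ y₀ : ℤ}
    (hstep : ∀ x, |f (x + 1) - f x| ≤ K) (hsep : ∀ x y, x + D < y → K < |f y - f x|)
    (hxy₀ : x₀ + D < y₀) (hlt₀ : f x₀ < f y₀) : CoarselyStrictMono D f := by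
  have hside : ∀ x y, x + D < y → (f x < f y ↔ f x < f (x + D + 1)) := fun x y hxy =>
    lt_iff_lt_of_forall_abs_sub_le (fun m _ => hstep m) (fun m hm => hsep x m (by omega))
      (by omega : x + D + 1 ≤ y)
  have hshift : ∀ x, f x < f (x + D + 1) ↔ f (x + 1) < f (x + 1 + D + 1) := fun x => by
    rw [← hside x (x + D + 2) (by omega), ← hside (x + 1) (x + D + 2) (by omega)]
    have := abs_le.1 (hstep x)
    have := lt_abs.1 (hsep (x + 1) (x + D + 2) (by omega))
    omega
  have hconst : ∀ x, f x < f (x + D + 1) ↔ f 0 < f (0 + D + 1) := fun x => by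
    induction x using Int.induction_on with
    | zero => rfl
    | succ i ih => rwa [← hshift]
    | pred i ih => rwa [hshift, sub_add_cancel]
  intro x y hxy
  rw [hside x y hxy, hconst, ← hconst x₀, ← hside x₀ y₀ hxy₀]
  exact hlt₀

theorem coarselyStrictMono_or_neg {f : ℤ → ℤ} {K D : ℤ}
    (hstep : ∀ x, |f (x + 1) - f x| ≤ K) (hsep : ∀ x y, x + D < y → K < |f y - f x|) :
    CoarselyStrictMono D f ∨ CoarselyStrictMono D (-f) := by
  have hne : f 0 ≠ f (D + 1) := fun h => by
    have hK := (abs_nonneg _).trans (hstep 0)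
    have hsep₀ := hsep 0 (D + 1) (by omega)
    rw [h, sub_self, abs_zero] at hsep₀
    omega
  rcases hne.lt_or_gt with hlt | hgt
  · exact .inl (coarselyStrictMono_of_lt hstep hsep (by omega) hlt)
  · refine .inr (coarselyStrictMono_of_lt (K := K) (fun x => ?_) (fun x y hxy => ?_)
      (by omega : 0 + D < D + 1) (by simpa using hgt))
    · rw [Pi.neg_apply, Pi.neg_apply, neg_sub_neg, abs_sub_comm]
      exact hstep x
    · rw [Pi.neg_apply, Pi.neg_apply, neg_sub_neg, abs_sub_comm]
      exact hsep x y hxy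

theorem CoarselyStrictMono.inverse {f g : ℤ → ℤ} {K L : ℤ} (hfg : LeftInverse g f)
    (hgf : RightInverse g f) (hLip : ∀ x y, |f x - f y| ≤ K * |x - y|)
    (hLipInv : ∀ u v, |g u - g v| ≤ L * |u - v|) (hf : CoarselyStrictMono (K * L) f) :
    CoarselyStrictMono (K * L) g := by
  have hK := one_le_of_injective_of_abs_sub_le hfg.injective hLip
  have hL := one_le_of_injective_of_abs_sub_le hgf.injective hLipInv
  have hKL := hf.nonneg
  -- `g` increases on the pair `(f 0, f N)`, whose distance is at least `N / L > K * L`.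
  set N := L * (K * L + 1)
  have hfN : f 0 + K * L < f N := by
    have hlt : f 0 < f N := hf (by nlinarith [le_mul_of_one_le_left hKL hL])
    have := abs_sub_le_mul_abs_sub_of_leftInverse hfg hLipInv N 0
    rw [sub_zero, abs_of_pos (by positivity), abs_of_pos (sub_pos.2 hlt)] at this
    nlinarith
  refine coarselyStrictMono_of_lt (fun u => by simpa using hLipInv (u + 1) u)
    (fun u v huv => lt_abs_sub_of_leftInverse hgf (by omega) hLip (by rwa [mul_comm])) hfN ?_
  rw [hfg, hfg]
  positivity

theorem exists_abs_sub_le_of_sub_le {ι : Type*} [Nonempty ι] (h : ι → ℤ) {D : ℤ}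
    (hosc : ∀ x y, h y - h x ≤ 2 * D) : ∃ c, ∀ x, |h x - c| ≤ D := by
  obtain ⟨x₀⟩ := ‹Nonempty ι›
  obtain ⟨_, ⟨x₁, rfl⟩, hmin⟩ := Int.exists_least_of_bdd (P := (· ∈ Set.range h))
    ⟨h x₀ - 2 * D, by rintro _ ⟨x, rfl⟩; linarith [hosc x x₀]⟩ ⟨h x₀, x₀, rfl⟩
  exact ⟨h x₁ + D, fun x => abs_le.2 ⟨by linarith [hmin _ ⟨x, rfl⟩], by linarith [hosc x₁ x]⟩⟩

theorem exists_abs_sub_add_le_of_coarselyStrictMono {f g : ℤ → ℤ} {K L : ℤ}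
    (hfg : LeftInverse g f) (hgf : RightInverse g f)
    (hLip : ∀ x y, |f x - f y| ≤ K * |x - y|) (hLipInv : ∀ u v, |g u - g v| ≤ L * |u - v|)
    (hf : CoarselyStrictMono (K * L) f) : ∃ c, ∀ x, |f x - (x + c)| ≤ K * L := by
  have hg := hf.inverse hfg hgf hLip hLipInv
  obtain ⟨c, hc⟩ := exists_abs_sub_le_of_sub_le (fun x => f x - x) (hf.sub_sub_sub_le hg hfg hgf)
  exact ⟨c, fun x => by simpa only [sub_sub] using hc x⟩

theorem exists_abs_sub_neg_add_le_of_coarselyStrictMono_neg {f g : ℤ → ℤ} {K L : ℤ}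
    (hfg : LeftInverse g f) (hgf : RightInverse g f)
    (hLip : ∀ x y, |f x - f y| ≤ K * |x - y|) (hLipInv : ∀ u v, |g u - g v| ≤ L * |u - v|)
    (hf : CoarselyStrictMono (K * L) (-f)) : ∃ c, ∀ x, |f x - (-x + c)| ≤ K * L := by
  have hfg' : LeftInverse (fun u => g (-u)) (-f) := fun x => by simp [hfg x]
  have hgf' : RightInverse (fun u => g (-u)) (-f) := fun u => by simp [hgf (-u)]
  have hLip' : ∀ x y, |(-f) x - (-f) y| ≤ K * |x - y| := fun x y => by
    rw [Pi.neg_apply, Pi.neg_apply, neg_sub_neg, abs_sub_comm]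
    exact hLip x y
  have hLipInv' : ∀ u v, |g (-u) - g (-v)| ≤ L * |u - v| := fun u v =>
    (hLipInv (-u) (-v)).trans_eq (by rw [neg_sub_neg, abs_sub_comm])
  obtain ⟨c, hc⟩ := exists_abs_sub_add_le_of_coarselyStrictMono hfg' hgf' hLip' hLipInv' hf
  refine ⟨-c, fun x => ?_⟩
  rw [← abs_neg]
  convert hc x using 2
  simp only [Pi.neg_apply]
  ring

/-- A bi-Lipschitz bijection of ℤ is within K·L of a map x ↦ ε·x + c with ε = ±1. -/
theorem biLipschitz_bijection_int_close_to_isometry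
    (f g : ℤ → ℤ) (hfg : Function.LeftInverse g f) (hgf : Function.RightInverse g f)
    (K L : ℤ)
    (hLip : ∀ x y : ℤ, |f x - f y| ≤ K * |x - y|)
    (hLipInv : ∀ u v : ℤ, |g u - g v| ≤ L * |u - v|) :
    ∃ (ε c : ℤ), (ε = 1 ∨ ε = -1) ∧ ∀ x : ℤ, |f x - (ε * x + c)| ≤ K * L := by
  have hL := one_le_of_injective_of_abs_sub_le hgf.injective hLipInv
  rcases coarselyStrictMono_or_neg (fun x => by simpa using hLip (x + 1) x)
    (fun x y => lt_abs_sub_of_leftInverse hfg (by omega) hLipInv) with hf | hf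
  · obtain ⟨c, hc⟩ := exists_abs_sub_add_le_of_coarselyStrictMono hfg hgf hLip hLipInv hf
    exact ⟨1, c, .inl rfl, by simpa using hc⟩
  · obtain ⟨c, hc⟩ :=
      exists_abs_sub_neg_add_le_of_coarselyStrictMono_neg hfg hgf hLip hLipInv hf
    exact ⟨-1, c, .inr rfl, by simpa using hc⟩
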